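/- Let λ, λ_us, σ, w, N₀, P > 0 and η > 2. Define f₀(r) = (λ_us σ log 2 / (w P)) N₀ r^η and f₁(r) = (λ_us σ log 2 / (w P)) r^η. Then 2π ∫₀^∞ r (f₀(r) + 2πλP r^{2-η} f₁(r)/(η-2)) e^{-λπr²} dr = (log 2 · λ_us σ / (w λ)) · (N₀ Γ(1+η/2) / (P (πλ)^{η/2}) + 2/(η-2)). -/
import Mathlib


open MeasureTheory Real

/-- Mean load of the typical cell for elastic traffic in the low-SINR regime with power-law
path loss. With `f₀ r = (λus σ log 2 / (w P)) N₀ r^η` and `f₁ r = (λus σ log 2 / (w P)) r^η`,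
`2π ∫₀^∞ r (f₀ r + 2πλ P r^{2-η} f₁ r/(η-2)) e^{-λπr²} dr
  = (log 2 λus σ/(w λ)) (N₀ Γ(1+η/2)/(P (πλ)^{η/2}) + 2/(η-2))`. -/
theorem stmt9 (lam lamus σ w N₀ P η : ℝ)
    (hlam : 0 < lam) (hlamus : 0 < lamus) (hσ : 0 < σ) (hw : 0 < w)
    (hN₀ : 0 < N₀) (hP : 0 < P) (hη : 2 < η) :
    2 * π * ∫ r in Set.Ioi (0:ℝ),
        r * ((lamus * σ * Real.log 2 / (w * P)) * N₀ * r ^ η +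
            2 * π * lam * P * r ^ (2 - η) * ((lamus * σ * Real.log 2 / (w * P)) * r ^ η)
              / (η - 2)) *
          Real.exp (-(lam * π) * r ^ 2) =
      Real.log 2 * lamus * σ / (w * lam) *
        (N₀ * Real.Gamma (1 + η / 2) / (P * (π * lam) ^ (η / 2)) + 2 / (η - 2)) := by
  have hπ : (0:ℝ) < π := Real.pi_pos
  have hb : (0:ℝ) < lam * π := by positivity
  set b : ℝ := lam * π with hbdef
  set C : ℝ := lamus * σ * Real.log 2 / (w * P) with hC
  set A : ℝ := C * N₀ with hA
  set B : ℝ := 2 * π * lam * P * C / (η - 2) with hB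
  have hsum : (∫ r in Set.Ioi (0:ℝ),
        r * (C * N₀ * r ^ η + 2 * π * lam * P * r ^ (2 - η) * (C * r ^ η) / (η - 2)) *
          Real.exp (-b * r ^ 2))
      = (∫ r in Set.Ioi (0:ℝ), A * (r ^ (1 + η) * Real.exp (-b * r ^ 2)))
        + ∫ r in Set.Ioi (0:ℝ), B * (r ^ (3:ℝ) * Real.exp (-b * r ^ 2)) := by
    rw [← integral_add
      ((integrableOn_rpow_mul_exp_neg_mul_sq hb (by linarith : (-1:ℝ) < 1 + η)).const_mul A)
      ((integrableOn_rpow_mul_exp_neg_mul_sq hb (by norm_num : (-1:ℝ) < 3)).const_mul B)]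
    refine setIntegral_congr_fun measurableSet_Ioi (fun r hr => ?_)
    have h0 : (0:ℝ) < r := hr
    have e1 : r ^ (1 + η) = r * r ^ η := by
      rw [Real.rpow_add h0, Real.rpow_one]
    have e2 : r ^ (3:ℝ) = r * (r ^ (2 - η) * r ^ η) := by
      rw [← Real.rpow_add h0, show (2 - η) + η = (2:ℝ) by ring,
        show (3:ℝ) = 1 + 2 by norm_num, Real.rpow_add h0, Real.rpow_one, Real.rpow_two]
    rw [e1, e2]; ring
  have hI1 : (∫ r in Set.Ioi (0:ℝ), r ^ (1 + η) * Real.exp (-b * r ^ 2))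
      = b ^ (-(1 + η + 1) / 2) * (1 / 2) * Real.Gamma ((1 + η + 1) / 2) := by
    simp_rw [← Real.rpow_two]
    exact integral_rpow_mul_exp_neg_mul_rpow two_pos (by linarith) hb
  have hI2 : (∫ r in Set.Ioi (0:ℝ), r ^ (3:ℝ) * Real.exp (-b * r ^ 2))
      = b ^ (-(2:ℝ)) * (1 / 2) := by
    simp_rw [← Real.rpow_two]
    rw [integral_rpow_mul_exp_neg_mul_rpow two_pos (by norm_num) hb,
      show ((3:ℝ) + 1) / 2 = 2 by norm_num, Real.Gamma_two, mul_one,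
      show (-((3:ℝ) + 1) / 2) = -2 by norm_num]
  have hG : ((1 + η + 1) / 2 : ℝ) = 1 + η / 2 := by ring
  have hb1 : b ^ (-(1 + η + 1) / 2 : ℝ) = (b * b ^ (η / 2 : ℝ))⁻¹ := by
    rw [show (-(1 + η + 1) / 2 : ℝ) = -(1 + η / 2) by ring, Real.rpow_neg hb.le,
      Real.rpow_add hb, Real.rpow_one]
  have hb2 : b ^ (-(2:ℝ)) = (b ^ 2)⁻¹ := by
    rw [Real.rpow_neg hb.le, Real.rpow_two]
  rw [hsum, integral_const_mul, integral_const_mul, hI1, hI2, hG, hb1, hb2]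
  have hbη : (0:ℝ) < b ^ (η / 2 : ℝ) := Real.rpow_pos_of_pos hb _
  have hπlam : (π * lam : ℝ) = b := by rw [hbdef]; ring
  rw [hπlam]
  rw [hA, hB, hC]
  have hη2 : η - 2 ≠ 0 := by linarith
  field_simp
  ring
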